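/- Let (S(i)) be the Bernoulli(p) random walk on ℤ and a ∈ ℤ. For x, y both strictly less than a (or both strictly greater than a), and j ∈ ℕ: P_x{S(j) = y, j ≤ τ_a} = P_x{S(j) = y} - (p/q)^{y-a} P_x{S(j) = 2a - y}, where τ_a = min{i ≥ 1 : S(i) = a}. -/

import Mathlib

open Finset

noncomputable section

/-- Step value of the Bernoulli walk: `+1` for `true`, `-1` for `false`. -/
def stepVal (b : Bool) : ℤ := if b then 1 else -1

/-- Position at time `i` of the walk started at `x` with step sequence `ε`. -/
def walkFn (x : ℤ) (ε : ℕ → Bool) (i : ℕ) : ℤ :=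
  x + ∑ k ∈ Finset.range i, stepVal (ε k)

/-- Extend a finite sequence by a default value. -/
def extendF {n : ℕ} {α : Type*} (d : α) (ε : Fin n → α) : ℕ → α :=
  fun k => if h : k < n then ε ⟨k, h⟩ else d

/-- Weight of a single step: `p` for `+1`, `1-p` for `-1`. -/
def wt (p : ℝ) (b : Bool) : ℝ := if b then p else 1 - p

open Classical in
/-- Probability, for the Bernoulli(p) walk started at `x`, of an event `P` on the path,
computed over the horizon `n` (the event should only depend on times `≤ n`). -/
def walkProb (p : ℝ) (x : ℤ) (n : ℕ) (P : (ℕ → ℤ) → Prop) : ℝ :=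
  ∑ ε : Fin n → Bool, if P (walkFn x (extendF false ε)) then ∏ k, wt p (ε k) else 0

end

section AuxLemmas

open Classical

lemma walkFn_zero (x : ℤ) (ε : ℕ → Bool) : walkFn x ε 0 = x := by simp [walkFn]

lemma walkFn_succ (x : ℤ) (ε : ℕ → Bool) (i : ℕ) :
    walkFn x ε (i + 1) = walkFn x ε i + stepVal (ε i) := by
  simp [walkFn, Finset.sum_range_succ, add_assoc]

lemma stepVal_not (b : Bool) : stepVal (!b) = - stepVal b := by
  cases b <;> decide

lemma walkFn_step (x : ℤ) (ε : ℕ → Bool) (i : ℕ) :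
    walkFn x ε (i+1) = walkFn x ε i + 1 ∨ walkFn x ε (i+1) = walkFn x ε i - 1 := by
  rw [walkFn_succ]
  cases ε i
  · right; simp [stepVal]; ring
  · left; simp [stepVal]

lemma walkFn_sub (x : ℤ) (ε : ℕ → Bool) {m n : ℕ} (h : m ≤ n) :
    walkFn x ε n = walkFn x ε m + ∑ k ∈ Finset.Ico m n, stepVal (ε k) := by
  unfold walkFn
  rw [add_assoc, Finset.range_eq_Ico, Finset.range_eq_Ico,
    Finset.sum_Ico_consecutive _ (Nat.zero_le m) h]

lemma walkFn_congr (x : ℤ) (ε ε' : ℕ → Bool) (i : ℕ) (h : ∀ k < i, ε k = ε' k) :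
    walkFn x ε i = walkFn x ε' i := by
  unfold walkFn
  congr 1
  refine Finset.sum_congr rfl fun k hk => ?_
  rw [h k (Finset.mem_range.mp hk)]

lemma discreteIVT (f : ℕ → ℤ) (hf : ∀ i, f (i+1) = f i + 1 ∨ f (i+1) = f i - 1)
    (a : ℤ) (n : ℕ) (h1 : f 0 ≤ a) (h2 : a ≤ f n) : ∃ i, i ≤ n ∧ f i = a := by
  induction n with
  | zero => exact ⟨0, le_refl _, le_antisymm h1 h2⟩
  | succ n ih =>
    by_cases hc : a ≤ f n
    · obtain ⟨i, hi, hfi⟩ := ih hc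
      exact ⟨i, hi.trans (Nat.le_succ n), hfi⟩
    · push_neg at hc
      refine ⟨n+1, le_refl _, le_antisymm ?_ h2⟩
      rcases hf n with hh | hh <;> omega

lemma discreteIVT' (f : ℕ → ℤ) (hf : ∀ i, f (i+1) = f i + 1 ∨ f (i+1) = f i - 1)
    (a : ℤ) (n : ℕ) (h : (f 0 < a ∧ a < f n) ∨ (f n < a ∧ a < f 0)) :
    ∃ i, i ≤ n ∧ f i = a := by
  rcases h with ⟨h1, h2⟩ | ⟨h1, h2⟩
  · exact discreteIVT f hf a n h1.le h2.le
  · have hf' : ∀ i, -f (i+1) = -f i + 1 ∨ -f (i+1) = -f i - 1 := fun i => by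
      rcases hf i with hh | hh
      exacts [Or.inr (by omega), Or.inl (by omega)]
    have h1' : -f 0 ≤ -a := by omega
    have h2' : -a ≤ -f n := by omega
    obtain ⟨i, hi, hfi⟩ := discreteIVT (fun i => -f i) hf' (-a) n h1' h2'
    have hfi' : -f i = -a := hfi
    exact ⟨i, hi, by omega⟩

/-- First time the walk (started at `x`, steps `ε`) is at `a`. -/
noncomputable def hitT (x a : ℤ) (ε : ℕ → Bool) : ℕ := sInf {i | walkFn x ε i = a}

/-- Reflect the step sequence after the first hitting time of `a`. -/
noncomputable def reflSeq (x a : ℤ) {j : ℕ} (ε : Fin j → Bool) : Fin j → Bool :=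
  fun k => if (k : ℕ) < hitT x a (extendF false ε) then ε k else !(ε k)

lemma extend_refl {j : ℕ} (x a : ℤ) (ε : Fin j → Bool) (k : ℕ) (hk : k < j) :
    extendF false (reflSeq x a ε) k =
      if k < hitT x a (extendF false ε) then extendF false ε k else !(extendF false ε k) := by
  simp [extendF, reflSeq, hk]

lemma walk_refl_low {j : ℕ} (x a : ℤ) (ε : Fin j → Bool) {i : ℕ}
    (hi : i ≤ hitT x a (extendF false ε)) :
    walkFn x (extendF false (reflSeq x a ε)) i = walkFn x (extendF false ε) i := by
  refine walkFn_congr x _ _ i fun k hk => ?_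
  by_cases hkj : k < j
  · rw [extend_refl x a ε k hkj, if_pos (lt_of_lt_of_le hk hi)]
  · simp [extendF, hkj]

lemma walk_refl_high {j : ℕ} (x a : ℤ) (ε : Fin j → Bool)
    (hex : ∃ i, walkFn x (extendF false ε) i = a) :
    ∀ i, hitT x a (extendF false ε) ≤ i → i ≤ j →
      walkFn x (extendF false (reflSeq x a ε)) i = 2*a - walkFn x (extendF false ε) i := by
  have hta : walkFn x (extendF false ε) (hitT x a (extendF false ε)) = a := Nat.sInf_mem hex
  intro i hti
  induction i, hti using Nat.le_induction with
  | base =>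
    intro _
    rw [walk_refl_low x a ε (le_refl _), hta]
    ring
  | succ i hi ih =>
    intro hij
    have hij' : i ≤ j := Nat.le_of_succ_le hij
    have hk : i < j := hij
    rw [walkFn_succ, walkFn_succ, ih hij', extend_refl x a ε i hk, if_neg (by omega),
      stepVal_not]
    ring

lemma hitT_refl {j : ℕ} (x a : ℤ) (ε : Fin j → Bool)
    (hex : ∃ i, walkFn x (extendF false ε) i = a) :
    hitT x a (extendF false (reflSeq x a ε)) = hitT x a (extendF false ε) := by
  have hta : walkFn x (extendF false ε) (hitT x a (extendF false ε)) = a := Nat.sInf_mem hex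
  have hmem : walkFn x (extendF false (reflSeq x a ε)) (hitT x a (extendF false ε)) = a := by
    rw [walk_refl_low x a ε (le_refl _)]; exact hta
  refine le_antisymm (Nat.sInf_le hmem) ?_
  by_contra hlt
  push_neg at hlt
  have hne : ∃ i, walkFn x (extendF false (reflSeq x a ε)) i = a := ⟨_, hmem⟩
  have hsmem : walkFn x (extendF false (reflSeq x a ε))
      (hitT x a (extendF false (reflSeq x a ε))) = a := Nat.sInf_mem hne
  rw [walk_refl_low x a ε (le_of_lt hlt)] at hsmem
  have hle : hitT x a (extendF false ε) ≤ hitT x a (extendF false (reflSeq x a ε)) :=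
    Nat.sInf_le hsmem
  omega

lemma refl_refl {j : ℕ} (x a : ℤ) (ε : Fin j → Bool)
    (hex : ∃ i, walkFn x (extendF false ε) i = a) :
    reflSeq x a (reflSeq x a ε) = ε := by
  funext k
  show (if (k : ℕ) < hitT x a (extendF false (reflSeq x a ε)) then reflSeq x a ε k
    else !(reflSeq x a ε k)) = ε k
  rw [hitT_refl x a ε hex]
  by_cases hk : (k : ℕ) < hitT x a (extendF false ε) <;> simp [reflSeq, hk]

lemma prod_wt_eq (p : ℝ) {j : ℕ} (ε : Fin j → Bool) :
    ∏ k, wt p (ε k) = ∏ k ∈ Finset.range j, wt p (extendF false ε k) := by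
  rw [← Fin.prod_univ_eq_prod_range (fun k => wt p (extendF false ε k)) j]
  refine Finset.prod_congr rfl fun k _ => ?_
  simp [extendF, k.isLt]

lemma prod_zpow_sum (c : ℝ) (hc : c ≠ 0) (s : Finset ℕ) (f : ℕ → ℤ) :
    ∏ k ∈ s, c ^ f k = c ^ (∑ k ∈ s, f k) := by
  induction s using Finset.cons_induction with
  | empty => simp
  | cons b s hb ih => rw [Finset.prod_cons, Finset.sum_cons, ih, ← zpow_add₀ hc]

lemma wt_not (p : ℝ) (hp0 : p ≠ 0) (hq0 : (1:ℝ) - p ≠ 0) (b : Bool) :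
    wt p (!b) = (p/(1-p)) ^ (-stepVal b) * wt p b := by
  cases b <;> simp [wt, stepVal] <;> field_simp

lemma weight_refl (p : ℝ) (hp0 : p ≠ 0) (hq0 : (1:ℝ) - p ≠ 0) {j : ℕ} (x a : ℤ)
    (ε : Fin j → Bool) (hex : ∃ i, walkFn x (extendF false ε) i = a)
    (htj : hitT x a (extendF false ε) ≤ j) :
    ∏ k, wt p (ε k) =
      (p/(1-p)) ^ (walkFn x (extendF false ε) j - a) * ∏ k, wt p (reflSeq x a ε k) := by
  have hr0 : p / (1 - p) ≠ 0 := div_ne_zero hp0 hq0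
  set t := hitT x a (extendF false ε) with htdef
  have hta : walkFn x (extendF false ε) t = a := Nat.sInf_mem hex
  have hsum : ∑ k ∈ Finset.Ico t j, stepVal (extendF false ε k)
      = walkFn x (extendF false ε) j - a := by
    have := walkFn_sub x (extendF false ε) htj
    omega
  rw [prod_wt_eq, prod_wt_eq, Finset.range_eq_Ico,
    ← Finset.prod_Ico_consecutive _ (Nat.zero_le t) htj,
    ← Finset.prod_Ico_consecutive _ (Nat.zero_le t) htj]
  have h1 : ∏ k ∈ Finset.Ico 0 t, wt p (extendF false (reflSeq x a ε) k)
      = ∏ k ∈ Finset.Ico 0 t, wt p (extendF false ε k) := by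
    refine Finset.prod_congr rfl fun k hk => ?_
    have hkt : k < t := (Finset.mem_Ico.mp hk).2
    by_cases hkj : k < j
    · rw [extend_refl x a ε k hkj, if_pos hkt]
    · simp [extendF, hkj]
  have h2 : ∏ k ∈ Finset.Ico t j, wt p (extendF false (reflSeq x a ε) k)
      = (p/(1-p)) ^ (-(walkFn x (extendF false ε) j - a)) *
        ∏ k ∈ Finset.Ico t j, wt p (extendF false ε k) := by
    have hpt : ∀ k ∈ Finset.Ico t j, wt p (extendF false (reflSeq x a ε) k)
        = (p/(1-p)) ^ (-stepVal (extendF false ε k)) * wt p (extendF false ε k) := by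
      intro k hk
      obtain ⟨hkt, hkj⟩ := Finset.mem_Ico.mp hk
      rw [extend_refl x a ε k hkj, if_neg (by omega), wt_not p hp0 hq0]
    rw [Finset.prod_congr rfl hpt, Finset.prod_mul_distrib,
      prod_zpow_sum _ hr0, Finset.sum_neg_distrib, hsum]
  rw [h1, h2]
  rw [← mul_assoc, ← mul_assoc, mul_comm ((p/(1-p)) ^ (walkFn x (extendF false ε) j - a)) _,
    mul_assoc _ _ ((p/(1-p)) ^ (-(walkFn x (extendF false ε) j - a))), ]
  rw [← zpow_add₀ hr0]
  simp

/-- The global reflection map. -/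
noncomputable def reflMap (x a : ℤ) {j : ℕ} (ε : Fin j → Bool) : Fin j → Bool :=
  if _ : ∃ i, walkFn x (extendF false ε) i = a then reflSeq x a ε else ε

lemma reflMap_invol (x a : ℤ) {j : ℕ} : Function.Involutive (reflMap x a (j := j)) := by
  intro ε
  by_cases h1 : ∃ i, walkFn x (extendF false ε) i = a
  · have hmem : walkFn x (extendF false (reflSeq x a ε)) (hitT x a (extendF false ε)) = a := by
      rw [walk_refl_low x a ε (le_refl _)]; exact Nat.sInf_mem h1
    unfold reflMap
    rw [dif_pos h1, dif_pos ⟨_, hmem⟩]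
    exact refl_refl x a ε h1
  · unfold reflMap
    rw [dif_neg h1, dif_neg h1]

end AuxLemmas

/-- Reflection principle for the walk killed at level `a`: for `x, y` both on the same
strict side of `a`, `P_x{S(j)=y, j ≤ τ_a} = P_x{S(j)=y} - (p/q)^{y-a} P_x{S(j)=2a-y}`. -/
theorem stmt9 (p : ℝ) (hp : p ∈ Set.Ioo (0:ℝ) 1) (a x y : ℤ) (j : ℕ)
    (h : (x < a ∧ y < a) ∨ (a < x ∧ a < y)) :
    walkProb p x j (fun S => S j = y ∧ ∀ i, 1 ≤ i → i < j → S i ≠ a) =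
      walkProb p x j (fun S => S j = y) -
        (p/(1-p)) ^ (y - a) * walkProb p x j (fun S => S j = 2*a - y) := by
  obtain ⟨hp0, hp1⟩ := hp
  have hp0' : p ≠ 0 := ne_of_gt hp0
  have hq0' : (1:ℝ) - p ≠ 0 := by linarith
  have hxa : x ≠ a := by omega
  have hya : y ≠ a := by omega
  -- crossing lemma instance
  have hcross : ∀ (ε : Fin j → Bool), walkFn x (extendF false ε) j = 2*a - y →
      ∃ i, i ≤ j ∧ walkFn x (extendF false ε) i = a := by
    intro ε hj
    apply discreteIVT' (walkFn x (extendF false ε)) (fun i => walkFn_step x _ i) a j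
    rw [walkFn_zero, hj]
    rcases h with ⟨h1, h2⟩ | ⟨h1, h2⟩
    · left; omega
    · right; omega
  have hsplit : walkProb p x j (fun S => S j = y ∧ ∀ i, 1 ≤ i → i < j → S i ≠ a)
      = walkProb p x j (fun S => S j = y)
        - walkProb p x j (fun S => S j = y ∧ ∃ i, 1 ≤ i ∧ i < j ∧ S i = a) := by
    unfold walkProb
    rw [← Finset.sum_sub_distrib]
    refine Finset.sum_congr rfl fun ε _ => ?_
    by_cases h1 : walkFn x (extendF false ε) j = y
    · by_cases h2 : ∀ i, 1 ≤ i → i < j → walkFn x (extendF false ε) i ≠ a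
      · rw [if_pos ⟨h1, h2⟩, if_pos h1, if_neg, sub_zero]
        rintro ⟨-, i, hi1, hi2, hia⟩
        exact h2 i hi1 hi2 hia
      · push_neg at h2
        obtain ⟨i, hi1, hi2, hia⟩ := h2
        rw [if_neg (fun hc => hc.2 i hi1 hi2 hia), if_pos h1,
          if_pos ⟨h1, i, hi1, hi2, hia⟩]
        ring
    · rw [if_neg (fun hc => h1 hc.1), if_neg h1, if_neg (fun hc => h1 hc.1)]
      ring
  rw [hsplit]
  congr 1
  -- key reflection identity
  unfold walkProb
  rw [Finset.mul_sum]
  refine Finset.sum_bijective _ (reflMap_invol x a).bijective (by simp) ?_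
  intro ε _
  by_cases hex : ∃ i, walkFn x (extendF false ε) i = a
  · have hta : walkFn x (extendF false ε) (hitT x a (extendF false ε)) = a := Nat.sInf_mem hex
    have ht1 : 1 ≤ hitT x a (extendF false ε) := by
      rcases Nat.eq_zero_or_pos (hitT x a (extendF false ε)) with h0 | hpos
      · rw [h0, walkFn_zero] at hta; omega
      · exact hpos
    have hR : reflMap x a ε = reflSeq x a ε := dif_pos hex
    by_cases htj : hitT x a (extendF false ε) ≤ j
    · have hWj : walkFn x (extendF false (reflSeq x a ε)) j
          = 2*a - walkFn x (extendF false ε) j :=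
        walk_refl_high x a ε hex j htj (le_refl j)
      by_cases hcond : walkFn x (extendF false ε) j = y ∧
          ∃ i, 1 ≤ i ∧ i < j ∧ walkFn x (extendF false ε) i = a
      · have hcnd2 : walkFn x (extendF false (reflSeq x a ε)) j = 2*a - y := by
          rw [hWj, hcond.1]
        rw [if_pos hcond, hR, if_pos hcnd2]
        have hw := weight_refl p hp0' hq0' x a ε hex htj
        rw [hcond.1] at hw
        exact hw
      · rw [if_neg hcond, hR, if_neg, mul_zero]
        intro hc
        apply hcond
        have hjy : walkFn x (extendF false ε) j = y := by
          rw [hWj] at hc; omega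
        refine ⟨hjy, hitT x a (extendF false ε), ht1, ?_, hta⟩
        rcases lt_or_eq_of_le htj with hlt | heq
        · exact hlt
        · rw [heq, hjy] at hta; omega
    · have hRe : reflSeq x a ε = ε := by
        funext k
        exact if_pos (lt_of_lt_of_le k.isLt (by omega))
      rw [hR, hRe]
      rw [if_neg, if_neg, mul_zero]
      · intro hc
        obtain ⟨i, hij, hia⟩ := hcross ε hc
        have hle : hitT x a (extendF false ε) ≤ i := Nat.sInf_le hia
        omega
      · rintro ⟨-, i, hi1, hi2, hia⟩
        have hle : hitT x a (extendF false ε) ≤ i := Nat.sInf_le hia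
        omega
  · have hR : reflMap x a ε = ε := dif_neg hex
    rw [hR, if_neg, if_neg, mul_zero]
    · intro hc
      obtain ⟨i, hij, hia⟩ := hcross ε hc
      exact hex ⟨i, hia⟩
    · rintro ⟨-, i, hi1, hi2, hia⟩
      exact hex ⟨i, hia⟩
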